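/- arXiv:2303.06762 — 5 statements merged into one kernel-verified Lean document; each statement's English description precedes it below -/
import Mathlib

section
/- With the setting of the augmented Lagrangian Uzawa iteration (A SPD, B surjective, exact solution (u,p), iterates (u⁽ⁿ⁾, p⁽ⁿ⁾)), there is a constant C depending only on the norm of B A^{-1/2} such that ‖u⁽ⁿ⁾ − u‖_A ≤ C √ε ‖p⁽ⁿ⁾ − p‖, where ‖v‖_A := √⟨A v, v⟩. -/
open scoped RealInnerProductSpace

/-- For the augmented Lagrangian Uzawa iteration there is a constant `C`
(depending only on the norm of `B A^{-1/2}`) such that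
`‖u⁽ⁿ⁾ − u‖_A ≤ C √ε ‖p⁽ⁿ⁾ − p‖`, where `‖v‖_A = √⟨A v, v⟩`. -/
theorem stmt2 {V Q : Type*}
    [NormedAddCommGroup V] [InnerProductSpace ℝ V] [FiniteDimensional ℝ V]
    [NormedAddCommGroup Q] [InnerProductSpace ℝ Q] [FiniteDimensional ℝ Q]
    (A : V →ₗ[ℝ] V) (B : V →ₗ[ℝ] Q)
    (hAsym : A.IsSymmetric) (hApos : ∀ v : V, v ≠ 0 → 0 < ⟪A v, v⟫)
    (hB : Function.Surjective B)
    -- `Asqrtinv` plays the role of `A^{-1/2}`: a symmetric operator with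
    -- `Asqrtinv ∘ Asqrtinv ∘ A = id`.
    (Asqrtinv : V →ₗ[ℝ] V) (hAsqrtinvSym : Asqrtinv.IsSymmetric)
    (hAsqrtinv : Asqrtinv ∘ₗ Asqrtinv ∘ₗ A = LinearMap.id)
    (F u : V) (p : Q)
    (hsol1 : A u + LinearMap.adjoint B p = F) (hsol2 : B u = 0)
    (ε : ℝ) (hε : 0 < ε)
    (useq : ℕ → V) (pseq : ℕ → Q)
    (hp0 : pseq 0 = 0)
    (hiter1 : ∀ n : ℕ,
      (A + ε⁻¹ • (LinearMap.adjoint B ∘ₗ B)) (useq (n + 1)) =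
        F - LinearMap.adjoint B (pseq n))
    (hiter2 : ∀ n : ℕ, pseq (n + 1) = pseq n - ε⁻¹ • B (useq (n + 1))) :
    ∃ C : ℝ, 0 < C ∧ C ≤ ‖(B ∘ₗ Asqrtinv).toContinuousLinearMap‖ + 1 ∧
      ∀ n : ℕ, 1 ≤ n →
        Real.sqrt ⟪A (useq n - u), useq n - u⟫ ≤
          C * Real.sqrt ε * ‖pseq n - p‖ := by
  refine ⟨1, one_pos, le_add_of_nonneg_left (norm_nonneg _), ?_⟩
  intro n hn
  obtain ⟨m, rfl⟩ : ∃ m, n = m + 1 := ⟨n - 1, by omega⟩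
  obtain ⟨e, he⟩ : ∃ e : V, e = useq (m + 1) - u := ⟨_, rfl⟩
  obtain ⟨r, hr⟩ : ∃ r : Q, r = pseq m - p := ⟨_, rfl⟩
  obtain ⟨s, hs⟩ : ∃ s : Q, s = pseq (m + 1) - p := ⟨_, rfl⟩
  rw [← he, ← hs]
  -- B e = ε • (r - s)
  have hBe : B e = ε • (r - s) := by
    have h2 := hiter2 m
    have hdiff : r - s = ε⁻¹ • B (useq (m + 1)) := by
      rw [hr, hs, h2]; abel
    have hsm : ε • (r - s) = B (useq (m + 1)) := by
      rw [hdiff, smul_smul, mul_inv_cancel₀ hε.ne', one_smul]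
    rw [he, map_sub, hsol2, sub_zero, hsm]
  -- A e = -(B* r) - ε⁻¹ • B* (B e)
  have hAe : A e = -(LinearMap.adjoint B r) - ε⁻¹ • LinearMap.adjoint B (B e) := by
    have h1 := hiter1 m
    simp only [LinearMap.add_apply, LinearMap.smul_apply, LinearMap.comp_apply] at h1
    have hFu : F - LinearMap.adjoint B p = A u := by
      rw [← hsol1]; abel
    have hBuseq : B (useq (m + 1)) = B e := by
      rw [he, map_sub, hsol2, sub_zero]
    rw [hBuseq] at h1
    have hA1 : A (useq (m + 1)) = F - LinearMap.adjoint B (pseq m)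
        - ε⁻¹ • LinearMap.adjoint B (B e) := by
      rw [eq_sub_iff_add_eq, h1]
    have hAeu : A e = A (useq (m + 1)) - A u := by rw [he, map_sub]
    rw [hAeu, hA1, ← hFu, hr, map_sub (LinearMap.adjoint B) (pseq m) p]
    abel
  -- scalar estimate
  have hkey : ⟪A e, e⟫ ≤ ε * ‖s‖ ^ 2 := by
    have hinner : ⟪A e, e⟫ = -(ε * ⟪r, r - s⟫) - ε * ⟪r - s, r - s⟫ := by
      rw [hAe, inner_sub_left, inner_neg_left, LinearMap.adjoint_inner_left,
        real_inner_smul_left, LinearMap.adjoint_inner_left, hBe]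
      simp only [real_inner_smul_left, real_inner_smul_right]
      field_simp
    have h1 : ⟪r, s⟫ ≤ ‖r‖ * ‖s‖ := real_inner_le_norm r s
    have h2 : ⟪r, r⟫ = ‖r‖ ^ 2 := real_inner_self_eq_norm_sq r
    have h3 : ⟪s, s⟫ = ‖s‖ ^ 2 := real_inner_self_eq_norm_sq s
    have hexp : ⟪A e, e⟫ = -(2 * ε * ⟪r, r⟫) + 3 * ε * ⟪r, s⟫ - ε * ⟪s, s⟫ := by
      rw [hinner, inner_sub_left, inner_sub_right, inner_sub_right,
        real_inner_comm s r]
      ring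
    rw [hexp, h2, h3]
    nlinarith [hε.le, sq_nonneg (‖r‖ - ‖s‖), mul_le_mul_of_nonneg_left h1
      (by positivity : (0:ℝ) ≤ 3 * ε), sq_nonneg ‖r‖, sq_nonneg ‖s‖]
  calc Real.sqrt ⟪A e, e⟫ ≤ Real.sqrt (ε * ‖s‖ ^ 2) := Real.sqrt_le_sqrt hkey
    _ = Real.sqrt ε * ‖s‖ := by
        rw [Real.sqrt_mul hε.le, Real.sqrt_sq (norm_nonneg s)]
    _ = 1 * Real.sqrt ε * ‖s‖ := by ring
end

section
/- Let T be the iteration map on Q defined by the augmented Lagrangian Uzawa iteration T p = p − ε⁻¹ B (A + ε⁻¹ B* B)⁻¹ (F − B* p), and let E = I − ε⁻¹ B (A + ε⁻¹ B* B)⁻¹ B* be its error propagation operator. Then E is symmetric positive semidefinite on Q and its spectral norm equals ε/(ε + μ₀), where μ₀ is the smallest eigenvalue of the Schur complement S = B A⁻¹ B*. -/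
open scoped RealInnerProductSpace

/-- Auxiliary: a nonneg quadratic `a t² + 2 b t ≥ 0` with `a ≥ 0` forces `b = 0`. -/
lemma quad_aux_stmt5 {a b : ℝ} (ha : 0 ≤ a) (h : ∀ t : ℝ, 0 ≤ a * t ^ 2 + 2 * b * t) :
    b = 0 := by
  have hA1 : (0:ℝ) < a + 1 := by linarith
  have h1 := h (-(b / (a + 1)))
  have h2 : 0 ≤ (a * (-(b / (a + 1))) ^ 2 + 2 * b * (-(b / (a + 1)))) * (a + 1) ^ 2 :=
    mul_nonneg h1 (by positivity)
  have h3 : (a * (-(b / (a + 1))) ^ 2 + 2 * b * (-(b / (a + 1)))) * (a + 1) ^ 2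
      = -(b ^ 2 * (a + 2)) := by
    field_simp
    ring
  rw [h3] at h2
  have hb2 : b ^ 2 = 0 := le_antisymm (by nlinarith [sq_nonneg b]) (sq_nonneg b)
  exact pow_eq_zero_iff two_ne_zero |>.mp hb2

set_option maxHeartbeats 1600000 in
/-- The error propagation operator
`E = I − ε⁻¹ B (A + ε⁻¹ B* B)⁻¹ B*` of the augmented Lagrangian Uzawa iteration is
symmetric positive semidefinite on `Q` and its spectral norm equals `ε/(ε + μ₀)`,
where `μ₀` is the smallest eigenvalue of the Schur complement `S = B A⁻¹ B*`. -/
theorem stmt5 {V Q : Type*}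
    [NormedAddCommGroup V] [InnerProductSpace ℝ V] [FiniteDimensional ℝ V]
    [NormedAddCommGroup Q] [InnerProductSpace ℝ Q] [FiniteDimensional ℝ Q]
    (A Ainv : V →ₗ[ℝ] V) (B : V →ₗ[ℝ] Q)
    (hAsym : A.IsSymmetric) (hApos : ∀ v : V, v ≠ 0 → 0 < ⟪A v, v⟫)
    (hB : Function.Surjective B)
    (hAinv1 : A ∘ₗ Ainv = LinearMap.id) (hAinv2 : Ainv ∘ₗ A = LinearMap.id)
    (ε : ℝ) (hε : 0 < ε)
    -- `Aεinv` is the inverse of the augmented operator `A + ε⁻¹ B* B`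
    (Aεinv : V →ₗ[ℝ] V)
    (hAεinv1 : (A + ε⁻¹ • (LinearMap.adjoint B ∘ₗ B)) ∘ₗ Aεinv = LinearMap.id)
    (hAεinv2 : Aεinv ∘ₗ (A + ε⁻¹ • (LinearMap.adjoint B ∘ₗ B)) = LinearMap.id)
    -- `μ₀` is the smallest eigenvalue of the Schur complement `S = B A⁻¹ B*`
    (μ₀ : ℝ) (hμ₀pos : 0 < μ₀)
    (hμ₀lb : ∀ q : Q, μ₀ * ‖q‖ ^ 2 ≤ ⟪(B ∘ₗ Ainv ∘ₗ LinearMap.adjoint B) q, q⟫)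
    (hμ₀min : ∃ q : Q, q ≠ 0 ∧
      ⟪(B ∘ₗ Ainv ∘ₗ LinearMap.adjoint B) q, q⟫ = μ₀ * ‖q‖ ^ 2)
    -- the error propagation operator
    (E : Q →ₗ[ℝ] Q)
    (hE : E = LinearMap.id - ε⁻¹ • (B ∘ₗ Aεinv ∘ₗ LinearMap.adjoint B)) :
    E.IsSymmetric ∧ (∀ q : Q, 0 ≤ ⟪E q, q⟫) ∧
      ‖LinearMap.toContinuousLinearMap E‖ = ε / (ε + μ₀) := by
  have hεμ : (0:ℝ) < ε + μ₀ := by linarith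
  have hd : (0:ℝ) < 1 + ε⁻¹ * μ₀ := by positivity
  set K := LinearMap.adjoint B with hKdef
  set S := B ∘ₗ Ainv ∘ₗ K with hSdef
  set M := (LinearMap.id : Q →ₗ[ℝ] Q) + ε⁻¹ • S with hMdef
  have hAinv1' : ∀ x : V, A (Ainv x) = x := fun x => by
    simpa using LinearMap.ext_iff.mp hAinv1 x
  have hAinv2' : ∀ x : V, Ainv (A x) = x := fun x => by
    simpa using LinearMap.ext_iff.mp hAinv2 x
  have hAε1 : ∀ x : V, A (Aεinv x) + ε⁻¹ • K (B (Aεinv x)) = x := fun x => by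
    simpa [LinearMap.add_apply, LinearMap.smul_apply, LinearMap.comp_apply] using
      LinearMap.ext_iff.mp hAεinv1 x
  have hAε2 : ∀ x : V, Aεinv (A x + ε⁻¹ • K (B x)) = x := fun x => by
    simpa [LinearMap.add_apply, LinearMap.smul_apply, LinearMap.comp_apply] using
      LinearMap.ext_iff.mp hAεinv2 x
  have hE' : ∀ q : Q, E q = q - ε⁻¹ • B (Aεinv (K q)) := fun q => by
    rw [hE]; simp [LinearMap.sub_apply, LinearMap.smul_apply, LinearMap.comp_apply]
  have hM' : ∀ q : Q, M q = q + ε⁻¹ • B (Ainv (K q)) := fun q => by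
    simp [hMdef, hSdef, LinearMap.add_apply, LinearMap.smul_apply, LinearMap.comp_apply]
  -- M ∘ E = id
  have hME : ∀ q : Q, M (E q) = q := by
    intro q
    set w := Aεinv (K q) with hw
    have h1 : A w + ε⁻¹ • K (B w) = K q := hAε1 (K q)
    have h2 : K (E q) = A w := by
      rw [hE', map_sub, map_smul]
      have h3 : ε⁻¹ • K (B w) = K q - A w := by rw [← h1]; abel
      rw [h3]; abel
    rw [hM', h2, hAinv2', hE']
    abel
  -- E ∘ M = id
  have hEM : ∀ q : Q, E (M q) = q := by
    intro q
    set v := Ainv (K q) with hv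
    have hAv : A v = K q := hAinv1' (K q)
    have h2 : Aεinv (K (M q)) = v := by
      have h3 : K (M q) = A v + ε⁻¹ • K (B v) := by
        rw [hM', map_add, map_smul, hAv]
      rw [h3, hAε2]
    rw [hE' (M q), h2, hM']
    abel
  -- symmetry facts
  have hAinvSym : ∀ x y : V, ⟪Ainv x, y⟫ = ⟪x, Ainv y⟫ := by
    intro x y
    calc ⟪Ainv x, y⟫ = ⟪Ainv x, A (Ainv y)⟫ := by rw [hAinv1']
    _ = ⟪A (Ainv x), Ainv y⟫ := (hAsym _ _).symm
    _ = ⟪x, Ainv y⟫ := by rw [hAinv1']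
  have hSsym : ∀ x y : Q, ⟪S x, y⟫ = ⟪x, S y⟫ := by
    intro x y
    calc ⟪S x, y⟫ = ⟪B (Ainv (K x)), y⟫ := by simp [hSdef, LinearMap.comp_apply]
    _ = ⟪Ainv (K x), K y⟫ := by rw [hKdef, LinearMap.adjoint_inner_right]
    _ = ⟪K x, Ainv (K y)⟫ := hAinvSym _ _
    _ = ⟪x, B (Ainv (K y))⟫ := by rw [hKdef, LinearMap.adjoint_inner_left]
    _ = ⟪x, S y⟫ := by simp [hSdef, LinearMap.comp_apply]
  have hMsym : ∀ x y : Q, ⟪M x, y⟫ = ⟪x, M y⟫ := by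
    intro x y
    simp only [hMdef, LinearMap.add_apply, LinearMap.smul_apply, LinearMap.id_apply,
      inner_add_left, inner_add_right, real_inner_smul_left, real_inner_smul_right, hSsym x y]
  have hEsym : E.IsSymmetric := by
    intro p q
    calc ⟪E p, q⟫ = ⟪E p, M (E q)⟫ := by rw [hME]
    _ = ⟪M (E p), E q⟫ := (hMsym _ _).symm
    _ = ⟪p, E q⟫ := by rw [hME]
  -- quantitative bounds
  have hSlb : ∀ x : Q, μ₀ * ‖x‖ ^ 2 ≤ ⟪S x, x⟫ := hμ₀lb
  have hMlb : ∀ x : Q, (1 + ε⁻¹ * μ₀) * ‖x‖ ^ 2 ≤ ⟪M x, x⟫ := by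
    intro x
    have h1 := hSlb x
    have h2 : ⟪M x, x⟫ = ⟪x, x⟫ + ε⁻¹ * ⟪S x, x⟫ := by
      simp [hMdef, LinearMap.add_apply, LinearMap.smul_apply, inner_add_left,
        real_inner_smul_left]
    have h3 : ⟪x, x⟫ = ‖x‖ ^ 2 := real_inner_self_eq_norm_sq x
    have h4 := mul_le_mul_of_nonneg_left h1 (inv_nonneg.mpr hε.le)
    rw [h2, h3]
    nlinarith [h4]
  have hEpsd : ∀ q : Q, 0 ≤ ⟪E q, q⟫ := by
    intro q
    have h1 : ⟪E q, q⟫ = ⟪M (E q), E q⟫ := by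
      rw [real_inner_comm]; rw [hME]
    rw [h1]
    have h2 := hMlb (E q)
    have h3 : 0 ≤ (1 + ε⁻¹ * μ₀) * ‖E q‖ ^ 2 := by positivity
    linarith
  -- upper bound on norm
  set c := ε / (ε + μ₀) with hcdef
  have hc : c * (1 + ε⁻¹ * μ₀) = 1 := by
    rw [hcdef]
    field_simp
  have hcpos : 0 < c := by positivity
  have hupper : ∀ q : Q, ‖E q‖ ≤ c * ‖q‖ := by
    intro q
    have h1 := hMlb (E q)
    have h2 : ⟪M (E q), E q⟫ = ⟪q, E q⟫ := by rw [hME]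
    have h3 : ⟪q, E q⟫ ≤ ‖q‖ * ‖E q‖ := real_inner_le_norm q (E q)
    rcases eq_or_lt_of_le (norm_nonneg (E q)) with h0 | h0
    · rw [← h0]; positivity
    · have h4 : (1 + ε⁻¹ * μ₀) * ‖E q‖ ≤ ‖q‖ := by
        have h5 := h1.trans (h2.le.trans h3)
        have h6 : ((1 + ε⁻¹ * μ₀) * ‖E q‖) * ‖E q‖ ≤ ‖q‖ * ‖E q‖ := by
          calc ((1 + ε⁻¹ * μ₀) * ‖E q‖) * ‖E q‖ = (1 + ε⁻¹ * μ₀) * ‖E q‖ ^ 2 := by ring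
          _ ≤ ‖q‖ * ‖E q‖ := h5
        exact le_of_mul_le_mul_right h6 h0
      calc ‖E q‖ = c * ((1 + ε⁻¹ * μ₀) * ‖E q‖) := by rw [← mul_assoc, hc, one_mul]
      _ ≤ c * ‖q‖ := mul_le_mul_of_nonneg_left h4 hcpos.le
  -- the eigenvector
  obtain ⟨q₀, hq₀ne, heig⟩ := hμ₀min
  have hSq₀ : S q₀ = μ₀ • q₀ := by
    have key : ∀ x : Q, ⟪S q₀, x⟫ - μ₀ * ⟪q₀, x⟫ = 0 := by
      intro x
      set a : ℝ := ⟪S x, x⟫ - μ₀ * ⟪x, x⟫ with hadef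
      set b : ℝ := ⟪S q₀, x⟫ - μ₀ * ⟪q₀, x⟫ with hbdef
      have ha : 0 ≤ a := by
        have := hSlb x
        have h3 : ⟪x, x⟫ = ‖x‖ ^ 2 := real_inner_self_eq_norm_sq x
        simp only [hadef, h3]; linarith
      have hquad : ∀ t : ℝ, 0 ≤ a * t ^ 2 + 2 * b * t := by
        intro t
        have h1 := hSlb (q₀ + t • x)
        have h3 : ‖q₀ + t • x‖ ^ 2 = ⟪q₀ + t • x, q₀ + t • x⟫ :=
          (real_inner_self_eq_norm_sq _).symm
        rw [h3] at h1
        have hswap : ⟪S x, q₀⟫ = ⟪S q₀, x⟫ := by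
          rw [hSsym x q₀, real_inner_comm]
        have heig' : ⟪S q₀, q₀⟫ = μ₀ * ⟪q₀, q₀⟫ := by
          rw [heig, real_inner_self_eq_norm_sq]
        simp only [map_add, map_smul, inner_add_left, inner_add_right,
          real_inner_smul_left, real_inner_smul_right, hswap, heig'] at h1
        have hcx : ⟪x, q₀⟫ = ⟪q₀, x⟫ := real_inner_comm q₀ x
        rw [hcx] at h1
        simp only [hadef, hbdef]
        nlinarith [h1]
      exact quad_aux_stmt5 ha hquad
    have key2 : ∀ x : Q, ⟪S q₀ - μ₀ • q₀, x⟫ = 0 := by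
      intro x
      rw [inner_sub_left, real_inner_smul_left]
      linarith [key x]
    have h0 : S q₀ - μ₀ • q₀ = 0 := by
      have := key2 (S q₀ - μ₀ • q₀)
      exact inner_self_eq_zero.mp this
    exact sub_eq_zero.mp h0
  have hEq₀ : E q₀ = c • q₀ := by
    have hMq₀ : M (c • q₀) = q₀ := by
      have h1 : M q₀ = (1 + ε⁻¹ * μ₀) • q₀ := by
        simp only [hMdef, LinearMap.add_apply, LinearMap.smul_apply, LinearMap.id_apply,
          hSq₀, smul_smul, add_smul, one_smul]
      rw [map_smul, h1, smul_smul, hc, one_smul]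
    calc E q₀ = E (M (c • q₀)) := by rw [hMq₀]
    _ = c • q₀ := hEM _
  have hq₀pos : 0 < ‖q₀‖ := norm_pos_iff.mpr hq₀ne
  refine ⟨hEsym, hEpsd, ?_⟩
  apply le_antisymm
  · apply ContinuousLinearMap.opNorm_le_bound _ hcpos.le
    intro q
    simpa using hupper q
  · have h1 : ‖LinearMap.toContinuousLinearMap E q₀‖ ≤
        ‖LinearMap.toContinuousLinearMap E‖ * ‖q₀‖ :=
      ContinuousLinearMap.le_opNorm _ q₀
    have h2 : ‖LinearMap.toContinuousLinearMap E q₀‖ = c * ‖q₀‖ := by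
      simp [hEq₀, norm_smul, abs_of_pos hcpos]
    rw [h2] at h1
    exact le_of_mul_le_mul_right h1 hq₀pos
end

section
/- Let V be a finite-dimensional real inner product space, A : V → V symmetric positive definite, and let V = Σ_{s∈S} V_s be a (possibly overlapping) decomposition into subspaces, where each element of V belongs to at most N of the supports (i.e., each v ∈ V_s interacts with at most N other subspaces: ⟨A v_s, v_t⟩ = 0 except for at most N indices t for each s). Let P_s be the A-orthogonal projection onto V_s and R = ς Σ_s P_s A⁻¹ the damped additive Schwarz (block Jacobi) smoother. If 0 < ς ≤ 1/N, then the operator I − R A is symmetric (in the A-inner product) and positive semidefinite, i.e., ⟨A(I − RA)v, v⟩ ≥ 0 for all v ∈ V. -/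
open scoped RealInnerProductSpace

section aux
variable {V : Type*} [NormedAddCommGroup V] [InnerProductSpace ℝ V]

lemma aux13_nonneg (A : V →ₗ[ℝ] V) (hApos : ∀ v : V, v ≠ 0 → 0 < ⟪A v, v⟫) (v : V) :
    0 ≤ ⟪A v, v⟫ := by
  by_cases h : v = 0
  · simp [h]
  · exact (hApos v h).le

lemma aux13_symm (A : V →ₗ[ℝ] V) (hAsym : A.IsSymmetric) (x y : V) :
    ⟪A x, y⟫ = ⟪A y, x⟫ := by
  rw [hAsym x y, real_inner_comm]

lemma aux13_cs (A : V →ₗ[ℝ] V) (hAsym : A.IsSymmetric)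
    (hApos : ∀ v : V, v ≠ 0 → 0 < ⟪A v, v⟫) (x y : V) :
    ⟪A x, y⟫ ^ 2 ≤ ⟪A x, x⟫ * ⟪A y, y⟫ := by
  by_cases hy : y = 0
  · simp [hy]
  · have hc : 0 < ⟪A y, y⟫ := hApos y hy
    have h0 : 0 ≤ ⟪A (⟪A y, y⟫ • x - ⟪A x, y⟫ • y), ⟪A y, y⟫ • x - ⟪A x, y⟫ • y⟫ :=
      aux13_nonneg A hApos _
    have hsym := aux13_symm A hAsym x y
    have hexp : ⟪A (⟪A y, y⟫ • x - ⟪A x, y⟫ • y), ⟪A y, y⟫ • x - ⟪A x, y⟫ • y⟫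
        = ⟪A y, y⟫ * ⟪A y, y⟫ * ⟪A x, x⟫ - ⟪A y, y⟫ * (⟪A x, y⟫ * ⟪A x, y⟫) := by
      simp only [map_sub, map_smul, inner_sub_left, inner_sub_right,
        real_inner_smul_left, real_inner_smul_right]
      rw [hsym]
      ring
    rw [hexp] at h0
    nlinarith [h0, hc]

end aux

/-- Let `V = Σ_s V_s` be an overlapping subspace decomposition, `P_s`
the `A`-orthogonal projections onto `V_s`, and suppose each `v ∈ V_s` interacts (in
the `A`-inner product) with at most `N` of the subspaces.  If `0 < ς ≤ 1/N`, then
the damped additive Schwarz error operator `I − ς Σ_s P_s` (which equals `I − R A`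
with `R = ς Σ_s P_s A⁻¹`) is symmetric in the `A`-inner product and positive
semidefinite: `⟨A (I − R A) v, v⟩ ≥ 0` for all `v`. -/
theorem stmt13 {V : Type*}
    [NormedAddCommGroup V] [InnerProductSpace ℝ V] [FiniteDimensional ℝ V]
    {ι : Type*} [Fintype ι]
    (A : V →ₗ[ℝ] V)
    (hAsym : A.IsSymmetric) (hApos : ∀ v : V, v ≠ 0 → 0 < ⟪A v, v⟫)
    (Vs : ι → Submodule ℝ V) (hspan : (⨆ s, Vs s) = ⊤)
    (P : ι → (V →ₗ[ℝ] V))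
    (hPmem : ∀ s, ∀ u : V, P s u ∈ Vs s)
    (hPdef : ∀ s, ∀ u : V, ∀ t ∈ Vs s, ⟪A (P s u), t⟫ = ⟪A u, t⟫)
    (N : ℕ) (hN : 0 < N)
    (hoverlap : ∀ s, ∀ v ∈ Vs s,
      Nat.card {t : ι | ∃ w ∈ Vs t, ⟪A v, w⟫ ≠ 0} ≤ N)
    (ς : ℝ) (hς : 0 < ς) (hςN : ς ≤ 1 / (N : ℝ))
    (E : V →ₗ[ℝ] V) (hEdef : E = LinearMap.id - ς • ∑ s, P s) :
    (∀ v w : V, ⟪A (E v), w⟫ = ⟪A v, E w⟫) ∧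
    (∀ v : V, 0 ≤ ⟪A (E v), v⟫) := by
  classical
  have hE : ∀ x : V, E x = x - ς • ∑ s, P s x := by
    intro x
    simp [hEdef, LinearMap.sum_apply]
  have hPsym : ∀ s (x y : V), ⟪A (P s x), y⟫ = ⟪A x, P s y⟫ := by
    intro s x y
    calc ⟪A (P s x), y⟫ = ⟪A y, P s x⟫ := aux13_symm A hAsym _ _
      _ = ⟪A (P s y), P s x⟫ := (hPdef s y _ (hPmem s x)).symm
      _ = ⟪A (P s x), P s y⟫ := aux13_symm A hAsym _ _
      _ = ⟪A x, P s y⟫ := hPdef s x _ (hPmem s y)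
  have hleft : ∀ v w : V, ⟪A (E v), w⟫ = ⟪A v, w⟫ - ς * ∑ s, ⟪A (P s v), w⟫ := by
    intro v w
    rw [hE v, map_sub, map_smul, map_sum, inner_sub_left, real_inner_smul_left, sum_inner]
  have hright : ∀ v w : V, ⟪A v, E w⟫ = ⟪A v, w⟫ - ς * ∑ s, ⟪A v, P s w⟫ := by
    intro v w
    rw [hE w, inner_sub_right, real_inner_smul_right, inner_sum]
  constructor
  · intro v w
    rw [hleft, hright]
    congr 2
    exact Finset.sum_congr rfl fun s _ => hPsym s v w
  · intro v
    set u : ι → V := fun s => P s v with hu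
    set a : ι → ℝ := fun s => ⟪A (u s), u s⟫ with ha
    have ha_nonneg : ∀ s, 0 ≤ a s := fun s => aux13_nonneg A hApos _
    have haPv : ∀ s, ⟪A (u s), v⟫ = a s := by
      intro s
      calc ⟪A (u s), v⟫ = ⟪A v, u s⟫ := aux13_symm A hAsym _ _
        _ = ⟪A (P s v), u s⟫ := (hPdef s v _ (hPmem s v)).symm
        _ = a s := rfl
    set S : ℝ := ∑ s, a s with hSdef
    have hS0 : 0 ≤ S := Finset.sum_nonneg fun s _ => ha_nonneg s
    set w : V := ∑ s, u s with hw
    have hwv : ⟪A w, v⟫ = S := by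
      rw [hw, map_sum, sum_inner]
      exact Finset.sum_congr rfl fun s _ => haPv s
    have hww : ⟪A w, w⟫ = ∑ s, ∑ t, ⟪A (u s), u t⟫ := by
      rw [hw, map_sum, sum_inner]
      exact Finset.sum_congr rfl fun s _ => inner_sum _ _ _
    -- cardinality bound
    have hcard : ∀ s, (Finset.univ.filter fun t => ⟪A (u s), u t⟫ ≠ 0).card ≤ N := by
      intro s
      have h1 := hoverlap s (u s) (hPmem s v)
      have hsub : {t : ι | ⟪A (u s), u t⟫ ≠ 0} ⊆ {t : ι | ∃ w ∈ Vs t, ⟪A (u s), w⟫ ≠ 0} :=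
        fun t ht => ⟨u t, hPmem t v, ht⟩
      have h2 : Nat.card {t : ι | ⟪A (u s), u t⟫ ≠ 0} ≤ N :=
        le_trans (Nat.card_mono (Set.toFinite _) hsub) h1
      rwa [Nat.card_coe_set_eq, Set.ncard_eq_toFinset_card', Set.toFinset_setOf] at h2
    have hrel_symm : ∀ s t : ι, (⟪A (u t), u s⟫ ≠ 0) ↔ (⟪A (u s), u t⟫ ≠ 0) := by
      intro s t
      rw [aux13_symm A hAsym (u t) (u s)]
    -- the half-sum bound
    have hhalf : ∀ b : ι → ℝ, (∀ s, 0 ≤ b s) →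
        (∑ s, ∑ t, if ⟪A (u s), u t⟫ ≠ 0 then b s / 2 else 0) ≤ ∑ s, (N : ℝ) * (b s / 2) := by
      intro b hb
      apply Finset.sum_le_sum
      intro s _
      rw [Finset.sum_ite, Finset.sum_const_zero, add_zero, Finset.sum_const, nsmul_eq_mul]
      exact mul_le_mul_of_nonneg_right (by exact_mod_cast hcard s) (by linarith [hb s])
    have hkey : ⟪A w, w⟫ ≤ (N : ℝ) * S := by
      rw [hww]
      have step1 : (∑ s, ∑ t, ⟪A (u s), u t⟫)
          ≤ ∑ s, ∑ t, ((if ⟪A (u s), u t⟫ ≠ 0 then a s / 2 else 0)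
              + (if ⟪A (u s), u t⟫ ≠ 0 then a t / 2 else 0)) := by
        apply Finset.sum_le_sum; intro s _
        apply Finset.sum_le_sum; intro t _
        by_cases h : ⟪A (u s), u t⟫ = 0
        · simp [h]
        · rw [if_pos h, if_pos h]
          have hcs : (⟪A (u s), u t⟫ : ℝ) ^ 2 ≤ a s * a t :=
            aux13_cs A hAsym hApos (u s) (u t)
          nlinarith [ha_nonneg s, ha_nonneg t, hcs, sq_nonneg (a s - a t)]
      have step2 : (∑ s, ∑ t, ((if ⟪A (u s), u t⟫ ≠ 0 then a s / 2 else 0)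
              + (if ⟪A (u s), u t⟫ ≠ 0 then a t / 2 else 0)))
          = (∑ s, ∑ t, if ⟪A (u s), u t⟫ ≠ 0 then a s / 2 else 0)
            + (∑ s, ∑ t, if ⟪A (u s), u t⟫ ≠ 0 then a t / 2 else 0) := by
        rw [← Finset.sum_add_distrib]
        exact Finset.sum_congr rfl fun s _ => Finset.sum_add_distrib
      have step3 : (∑ s, ∑ t, if ⟪A (u s), u t⟫ ≠ 0 then a t / 2 else 0)
          = ∑ t, ∑ s, if ⟪A (u t), u s⟫ ≠ 0 then a t / 2 else 0 := by
        rw [Finset.sum_comm]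
        exact Finset.sum_congr rfl fun t _ => Finset.sum_congr rfl fun s _ =>
          if_congr (not_congr (by rw [aux13_symm A hAsym (u s) (u t)])) rfl rfl
      have hb1 := hhalf a ha_nonneg
      have hb2 := hhalf a ha_nonneg
      calc (∑ s, ∑ t, ⟪A (u s), u t⟫)
          ≤ _ := step1
        _ = _ := step2
        _ ≤ (∑ s, (N : ℝ) * (a s / 2)) + (∑ s, (N : ℝ) * (a s / 2)) := by
            rw [step3]; exact add_le_add hb1 hb2
        _ = (N : ℝ) * S := by
            rw [hSdef, Finset.mul_sum, ← Finset.sum_add_distrib]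
            exact Finset.sum_congr rfl fun s _ => by ring
    have hAv : 0 ≤ ⟪A v, v⟫ := aux13_nonneg A hApos v
    have hS_le : S ≤ (N : ℝ) * ⟪A v, v⟫ := by
      have hcs := aux13_cs A hAsym hApos w v
      rw [hwv] at hcs
      rcases eq_or_lt_of_le hS0 with h | h
      · rw [← h]
        positivity
      · have h1 : S ^ 2 ≤ (N : ℝ) * S * ⟪A v, v⟫ :=
          le_trans hcs (mul_le_mul_of_nonneg_right hkey hAv)
        nlinarith [h1, h]
    have hNpos : (0 : ℝ) < N := by exact_mod_cast hN
    have hςN' : ς * N ≤ 1 := by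
      rw [le_div_iff₀ hNpos] at hςN
      exact hςN
    have hEv : ⟪A (E v), v⟫ = ⟪A v, v⟫ - ς * S := by
      rw [hleft v v]
      congr 2
      rw [hSdef]
      exact Finset.sum_congr rfl fun s _ => haPv s
    rw [hEv]
    nlinarith [mul_le_mul_of_nonneg_right hςN' hS0, hS_le, hNpos, hς, hS0]
end

section
/- Let S be a d-simplex in ℝ^d and define the full Raviart–Thomas space of order k on S as RT_k(S) = [P_k(S)]^d ⊕ x·P̃_k(S), where P̃_k denotes homogeneous polynomials of degree k. Then the divergence operator maps RT_k(S) onto P_k(S), i.e., for every q ∈ P_k(S) there exists v ∈ RT_k(S) with ∇·v = q. -/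
open MvPolynomial

lemma euler_aux {d n : ℕ} (f : MvPolynomial (Fin d) ℝ) (hf : f.IsHomogeneous n) :
    ∑ i, pderiv i (X i * f) = ((d + n : ℕ) : ℝ) • f := by
  have key : ∀ m ∈ f.support,
      ∑ i : Fin d, pderiv i (X i * monomial m (f.coeff m))
        = ((d + n : ℕ) : ℝ) • monomial m (f.coeff m) := by
    intro m hm
    have hdeg : ∑ i : Fin d, m i = n := by
      have := hf (mem_support_iff.mp hm)
      rw [← this]
      simp [Finsupp.weight_apply, Finsupp.sum_fintype]
    have : ∀ i : Fin d, pderiv i (X i * monomial m (f.coeff m))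
        = monomial m (f.coeff m * (m i + 1)) := by
      intro i
      rw [X, monomial_mul, one_mul, pderiv_monomial]
      simp [Finsupp.add_apply, Finsupp.single_apply]
      ring_nf
    rw [Finset.sum_congr rfl fun i _ => this i, ← map_sum, ← Finset.mul_sum]
    rw [smul_monomial]
    congr 1
    rw [smul_eq_mul, Finset.sum_add_distrib, ← Nat.cast_sum, hdeg, Finset.sum_const,
      Finset.card_univ, Fintype.card_fin]
    push_cast
    ring
  calc ∑ i, pderiv i (X i * f)
      = ∑ i, ∑ m ∈ f.support, pderiv i (X i * monomial m (f.coeff m)) := by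
        refine Finset.sum_congr rfl fun i _ => ?_
        conv_lhs => rw [f.as_sum]
        rw [Finset.mul_sum, map_sum]
    _ = ∑ m ∈ f.support, ∑ i, pderiv i (X i * monomial m (f.coeff m)) :=
        Finset.sum_comm
    _ = ∑ m ∈ f.support, ((d + n : ℕ) : ℝ) • monomial m (f.coeff m) :=
        Finset.sum_congr rfl key
    _ = ((d + n : ℕ) : ℝ) • f := by rw [← Finset.smul_sum, ← f.as_sum]

/-- The divergence operator maps the Raviart–Thomas space
`RT_k = [P_k]^d ⊕ x·P̃_k` onto `P_k`: for every polynomial `q` of total degree `≤ k`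
in `d` variables there exist `p₁, …, p_d` of total degree `≤ k` and a homogeneous
polynomial `h` of degree `k` such that `∑ᵢ ∂ᵢ (pᵢ + xᵢ h) = q`. -/
theorem stmt18 {d k : ℕ} (hd : 0 < d)
    (q : MvPolynomial (Fin d) ℝ) (hq : q.totalDegree ≤ k) :
    ∃ (p : Fin d → MvPolynomial (Fin d) ℝ) (h : MvPolynomial (Fin d) ℝ),
      (∀ i, (p i).totalDegree ≤ k) ∧ h.IsHomogeneous k ∧
      (∑ i, pderiv i (p i + X i * h)) = q := by
  set g : MvPolynomial (Fin d) ℝ :=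
    ∑ j ∈ Finset.range k, ((d + j : ℕ) : ℝ)⁻¹ • homogeneousComponent j q with hg
  set h : MvPolynomial (Fin d) ℝ := ((d + k : ℕ) : ℝ)⁻¹ • homogeneousComponent k q with hh
  refine ⟨fun i => X i * g, h, ?_, ?_, ?_⟩
  · intro i
    rcases Nat.eq_zero_or_pos k with rfl | hk
    · simp [hg]
    · calc (X i * g).totalDegree ≤ (X i).totalDegree + g.totalDegree := totalDegree_mul _ _
        _ ≤ 1 + (k - 1) := by
            gcongr
            · simp [totalDegree_X]
            · refine le_trans (totalDegree_finset_sum _ _) (Finset.sup_le fun j hj => ?_)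
              refine le_trans (totalDegree_smul_le _ _) ?_
              refine le_trans (homogeneousComponent_isHomogeneous j q).totalDegree_le ?_
              have := Finset.mem_range.mp hj
              omega
        _ = k := by omega
  · rw [hh, smul_eq_C_mul]
    simpa using (isHomogeneous_C (Fin d) (((d + k : ℕ) : ℝ)⁻¹)).mul
      (homogeneousComponent_isHomogeneous k q)
  · have hne : ∀ j : ℕ, ((d + j : ℕ) : ℝ) ≠ 0 := by
      intro j; positivity
    have hterm : ∀ j : ℕ, ∑ i, pderiv i (X i * (((d + j : ℕ) : ℝ)⁻¹ • homogeneousComponent j q))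
        = homogeneousComponent j q := by
      intro j
      calc ∑ i, pderiv i (X i * (((d + j : ℕ) : ℝ)⁻¹ • homogeneousComponent j q))
          = ((d + j : ℕ) : ℝ)⁻¹ • ∑ i, pderiv i (X i * homogeneousComponent j q) := by
            rw [Finset.smul_sum]
            exact Finset.sum_congr rfl fun i _ => by rw [mul_smul_comm, Derivation.map_smul]
        _ = ((d + j : ℕ) : ℝ)⁻¹ • (((d + j : ℕ) : ℝ) • homogeneousComponent j q) := by
            rw [euler_aux _ (homogeneousComponent_isHomogeneous j q)]
        _ = homogeneousComponent j q := by
            rw [smul_smul, inv_mul_cancel₀ (hne j), one_smul]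
    have : ∀ i : Fin d, X i * g + X i * h
        = ∑ j ∈ Finset.range (k + 1), X i * (((d + j : ℕ) : ℝ)⁻¹ • homogeneousComponent j q) := by
      intro i
      rw [hg, hh, Finset.sum_range_succ, Finset.mul_sum]
    show (∑ i, pderiv i (X i * g + X i * h)) = q
    simp_rw [this, map_sum]
    rw [Finset.sum_comm]
    rw [Finset.sum_congr rfl fun j _ => hterm j]
    have hzero : ∑ j ∈ Finset.Ico (q.totalDegree + 1) (k + 1), homogeneousComponent j q = 0 :=
      Finset.sum_eq_zero fun j hj => homogeneousComponent_eq_zero j q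
        (by have := Finset.mem_Ico.mp hj; omega)
    rw [← Finset.sum_range_add_sum_Ico _ (Nat.succ_le_succ hq), sum_homogeneousComponent,
      hzero, add_zero]
end

section
/- Let V, Q be finite-dimensional real inner product spaces, A : V → V symmetric positive definite, B : V → Q surjective, ε > 0, and A_ε := A + ε⁻¹ B* B. Then for all v in the kernel of B, ⟨A_ε v, v⟩ = ⟨A v, v⟩, while the smallest eigenvalue of A_ε restricted to the orthogonal complement (in the A-inner product) of ker B grows at least like ε⁻¹ μ₀ / ‖A⁻¹‖ as ε → 0; in particular the condition number of A_ε blows up as ε → 0 whenever B ≠ 0. -/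
open scoped RealInnerProductSpace

set_option maxHeartbeats 1000000 in
/-- Let `A_ε = A + ε⁻¹ B* B` with `A` SPD and `B` surjective with
nontrivial proper kernel.  On `ker B` the energy of `A_ε` coincides with that of `A`;
on the `A`-orthogonal complement of `ker B` the Rayleigh quotient of `A_ε` is at
least `ε⁻¹ μ₀ / ‖A⁻¹‖`; and the condition number of `A_ε` (the ratio of extreme
Rayleigh quotients) blows up as `ε → 0`. -/
theorem stmt19 {V Q : Type*}
    [NormedAddCommGroup V] [InnerProductSpace ℝ V] [FiniteDimensional ℝ V]
    [NormedAddCommGroup Q] [InnerProductSpace ℝ Q] [FiniteDimensional ℝ Q]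
    (A Ainv : V →ₗ[ℝ] V) (B : V →ₗ[ℝ] Q)
    (hAsym : A.IsSymmetric) (hApos : ∀ v : V, v ≠ 0 → 0 < ⟪A v, v⟫)
    (hB : Function.Surjective B)
    (hAinv1 : A ∘ₗ Ainv = LinearMap.id) (hAinv2 : Ainv ∘ₗ A = LinearMap.id)
    (hker1 : LinearMap.ker B ≠ ⊥) (hker2 : LinearMap.ker B ≠ ⊤)
    -- `μ₀` is the smallest eigenvalue of the Schur complement `B A⁻¹ B*`
    (μ₀ : ℝ) (hμ₀pos : 0 < μ₀)
    (hμ₀lb : ∀ q : Q, μ₀ * ‖q‖ ^ 2 ≤ ⟪(B ∘ₗ Ainv ∘ₗ LinearMap.adjoint B) q, q⟫) :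
    (∀ ε : ℝ, 0 < ε → ∀ v ∈ LinearMap.ker B,
      ⟪(A + ε⁻¹ • (LinearMap.adjoint B ∘ₗ B)) v, v⟫ = ⟪A v, v⟫) ∧
    (∀ ε : ℝ, 0 < ε → ∀ v : V, (∀ w ∈ LinearMap.ker B, ⟪A v, w⟫ = 0) →
      ε⁻¹ * μ₀ / ‖LinearMap.toContinuousLinearMap Ainv‖ * ‖v‖ ^ 2 ≤
        ⟪(A + ε⁻¹ • (LinearMap.adjoint B ∘ₗ B)) v, v⟫) ∧
    (∀ M : ℝ, ∃ δ : ℝ, 0 < δ ∧ ∀ ε : ℝ, 0 < ε → ε < δ →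
      ∃ v w : V, ‖v‖ = 1 ∧ ‖w‖ = 1 ∧
        M * ⟪(A + ε⁻¹ • (LinearMap.adjoint B ∘ₗ B)) w, w⟫ ≤
          ⟪(A + ε⁻¹ • (LinearMap.adjoint B ∘ₗ B)) v, v⟫) := by
  -- basic facts
  have hA1 : ∀ x : V, A (Ainv x) = x := fun x => congrFun (congrArg DFunLike.coe hAinv1) x
  have hA2 : ∀ x : V, Ainv (A x) = x := fun x => congrFun (congrArg DFunLike.coe hAinv2) x
  -- expansion of the quadratic form
  have expand : ∀ (ε : ℝ) (v : V),
      ⟪(A + ε⁻¹ • (LinearMap.adjoint B ∘ₗ B)) v, v⟫ = ⟪A v, v⟫ + ε⁻¹ * ‖B v‖ ^ 2 := by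
    intro ε v
    have : ⟪(LinearMap.adjoint B) (B v), v⟫ = ‖B v‖ ^ 2 := by
      rw [LinearMap.adjoint_inner_left, real_inner_self_eq_norm_sq]
    simp [LinearMap.add_apply, LinearMap.smul_apply, LinearMap.comp_apply, inner_add_left,
      real_inner_smul_left, this]
  have hApos' : ∀ v : V, 0 ≤ ⟪A v, v⟫ := by
    intro v
    by_cases hv : v = 0
    · simp [hv]
    · exact le_of_lt (hApos v hv)
  refine ⟨?_, ?_, ?_⟩
  · intro ε hε v hv
    have hBv : B v = 0 := hv
    rw [expand, hBv]
    simp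
  · -- second part
    intro ε hε v hv
    set N := ‖LinearMap.toContinuousLinearMap Ainv‖ with hN
    have hNnn : 0 ≤ N := norm_nonneg _
    by_cases hv0 : v = 0
    · rw [expand, hv0]
      simp
    -- N > 0
    have hAinv0 : Ainv ≠ 0 := by
      intro h
      apply hv0
      rw [← hA2 v, h]; simp
    have hNpos : 0 < N := by
      rw [hN, norm_pos_iff]
      intro h
      apply hAinv0
      ext x
      have : LinearMap.toContinuousLinearMap Ainv x = 0 := by rw [h]; rfl
      simpa using this
    -- Ainv bound
    have hNle : ∀ z : V, ‖Ainv z‖ ≤ N * ‖z‖ := by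
      intro z
      have := (LinearMap.toContinuousLinearMap Ainv).le_opNorm z
      simpa using this
    -- Ainv is symmetric
    have hsym' : ∀ x y : V, ⟪Ainv x, y⟫ = ⟪x, Ainv y⟫ := by
      intro x y
      calc ⟪Ainv x, y⟫ = ⟪Ainv x, A (Ainv y)⟫ := by rw [hA1]
        _ = ⟪A (Ainv x), Ainv y⟫ := (hAsym (Ainv x) (Ainv y)).symm
        _ = ⟪x, Ainv y⟫ := by rw [hA1]
    -- Ainv is positive
    have hpos' : ∀ x : V, 0 ≤ ⟪Ainv x, x⟫ := by
      intro x
      have h1 : ⟪Ainv x, x⟫ = ⟪Ainv x, A (Ainv x)⟫ := by rw [hA1]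
      rw [h1, ← hAsym]
      exact hApos' (Ainv x)
    -- Cauchy-Schwarz for the positive form
    have cs : ∀ x y : V, ⟪Ainv x, y⟫ ^ 2 ≤ ⟪Ainv x, x⟫ * ⟪Ainv y, y⟫ := by
      intro x y
      have hxy : ⟪Ainv y, x⟫ = ⟪Ainv x, y⟫ := by
        rw [hsym' y x, real_inner_comm]
      have hq : ∀ t : ℝ, 0 ≤ ⟪Ainv y, y⟫ * (t * t) + (2 * ⟪Ainv x, y⟫) * t + ⟪Ainv x, x⟫ := by
        intro t
        have h0 := hpos' (x + t • y)
        have he : ⟪Ainv (x + t • y), x + t • y⟫ =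
            ⟪Ainv y, y⟫ * (t * t) + (2 * ⟪Ainv x, y⟫) * t + ⟪Ainv x, x⟫ := by
          simp only [map_add, map_smul, inner_add_left, inner_add_right,
            real_inner_smul_left, real_inner_smul_right, hxy]
          ring
        linarith [he ▸ h0]
      have hd := discrim_le_zero hq
      rw [discrim] at hd
      nlinarith [hd]
    -- key operator inequality ‖Ainv u‖² ≤ N * ⟪Ainv u, u⟫
    have hkey : ∀ u : V, ‖Ainv u‖ ^ 2 ≤ N * ⟪Ainv u, u⟫ := by
      intro u
      by_cases h0 : Ainv u = 0
      · rw [h0]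
        simp [mul_nonneg hNnn (hpos' u)]
      · have h1 := cs u (Ainv u)
        have h2 : ⟪Ainv (Ainv u), Ainv u⟫ ≤ N * ‖Ainv u‖ ^ 2 := by
          calc ⟪Ainv (Ainv u), Ainv u⟫ ≤ ‖Ainv (Ainv u)‖ * ‖Ainv u‖ := real_inner_le_norm _ _
            _ ≤ N * ‖Ainv u‖ * ‖Ainv u‖ := by
                have := hNle (Ainv u)
                nlinarith [norm_nonneg (Ainv u)]
            _ = N * ‖Ainv u‖ ^ 2 := by ring
        have h3 : ⟪Ainv u, Ainv u⟫ = ‖Ainv u‖ ^ 2 := real_inner_self_eq_norm_sq _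
        have hnz : 0 < ‖Ainv u‖ := norm_pos_iff.mpr h0
        have h4 : ‖Ainv u‖ ^ 2 * ‖Ainv u‖ ^ 2 ≤ ⟪Ainv u, u⟫ * (N * ‖Ainv u‖ ^ 2) := by
          nlinarith [hpos' u]
        nlinarith [h4, pow_pos hnz 2]
    -- A v lies in the range of the adjoint of B
    have hrange : A v ∈ LinearMap.range (LinearMap.adjoint B) := by
      have horth : (LinearMap.range (LinearMap.adjoint B))ᗮ = LinearMap.ker B := by
        ext x
        simp only [Submodule.mem_orthogonal, LinearMap.mem_range, LinearMap.mem_ker,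
          forall_exists_index]
        constructor
        · intro h
          have h2 : ∀ q : Q, ⟪(LinearMap.adjoint B) q, x⟫ = 0 := fun q => h _ q rfl
          have h3 : ∀ q : Q, (⟪q, B x⟫ : ℝ) = 0 := by
            intro q
            rw [← LinearMap.adjoint_inner_left]
            exact h2 q
          have := h3 (B x)
          rwa [inner_self_eq_zero] at this
        · intro h u q hq
          rw [← hq, LinearMap.adjoint_inner_left, h, inner_zero_right]
      have : LinearMap.range (LinearMap.adjoint B) = (LinearMap.ker B)ᗮ := by
        rw [← horth, Submodule.orthogonal_orthogonal]
      rw [this, Submodule.mem_orthogonal]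
      intro u hu
      rw [real_inner_comm]
      exact hv u hu
    obtain ⟨q, hq⟩ := hrange
    -- q ≠ 0
    have hq0 : q ≠ 0 := by
      intro h
      apply hv0
      have : A v = 0 := by rw [← hq, h, map_zero]
      rw [← hA2 v, this, map_zero]
    -- v = Ainv (B* q)
    have hvq : Ainv ((LinearMap.adjoint B) q) = v := by rw [hq, hA2]
    -- Schur bound: μ₀ ‖q‖² ≤ ⟪B v, q⟫
    have hschur : μ₀ * ‖q‖ ^ 2 ≤ ⟪B v, q⟫ := by
      have := hμ₀lb q
      simp only [LinearMap.comp_apply] at this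
      rw [hvq] at this
      exact this
    have hBvq : ⟪B v, q⟫ ≤ ‖B v‖ * ‖q‖ := real_inner_le_norm _ _
    have hqpos : 0 < ‖q‖ := norm_pos_iff.mpr hq0
    -- ‖q‖ ≤ ‖B v‖ / μ₀ and ⟪A v, v⟫ = ⟪B v, q⟫
    have hAvv : ⟪A v, v⟫ = ⟪B v, q⟫ := by
      rw [← hq, LinearMap.adjoint_inner_left, real_inner_comm]
    have hAvv_le : ⟪A v, v⟫ * μ₀ ≤ ‖B v‖ ^ 2 := by
      have h1 : μ₀ * ‖q‖ ≤ ‖B v‖ := by nlinarith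
      rw [hAvv]
      nlinarith [norm_nonneg (B v)]
    -- ‖v‖² ≤ N ⟪A v, v⟫
    have hv2 : ‖v‖ ^ 2 ≤ N * ⟪A v, v⟫ := by
      have := hkey (A v)
      rw [hA2] at this
      rw [hAsym v v]
      exact this
    -- combine: μ₀ ‖v‖² ≤ N ‖B v‖²
    have hmain : μ₀ * ‖v‖ ^ 2 ≤ N * ‖B v‖ ^ 2 := by nlinarith [hApos' v]
    rw [expand]
    have hεinv : 0 < ε⁻¹ := inv_pos.mpr hε
    have : ε⁻¹ * μ₀ / N * ‖v‖ ^ 2 ≤ ε⁻¹ * ‖B v‖ ^ 2 := by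
      rw [div_mul_eq_mul_div, div_le_iff₀ hNpos]
      nlinarith
    linarith [hApos' v]
  · -- third part
    intro M
    obtain ⟨w0, hw0mem, hw0⟩ := (Submodule.ne_bot_iff _).mp hker1
    obtain ⟨v0, hv0⟩ : ∃ v0 : V, v0 ∉ LinearMap.ker B := by
      by_contra h
      push_neg at h
      exact hker2 (Submodule.eq_top_iff'.mpr h)
    set w := ‖w0‖⁻¹ • w0 with hw
    set v := ‖v0‖⁻¹ • v0 with hvdef
    have hv00 : v0 ≠ 0 := by
      intro h
      exact hv0 (h ▸ (LinearMap.ker B).zero_mem)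
    have hwnorm : ‖w‖ = 1 := norm_smul_inv_norm hw0
    have hvnorm : ‖v‖ = 1 := norm_smul_inv_norm hv00
    have hwmem : w ∈ LinearMap.ker B := Submodule.smul_mem _ _ hw0mem
    have hwne : w ≠ 0 := by
      intro h
      rw [h, norm_zero] at hwnorm
      norm_num at hwnorm
    have hBv : B v ≠ 0 := by
      rw [hvdef, map_smul]
      simp only [ne_eq, smul_eq_zero, inv_eq_zero, norm_eq_zero]
      push_neg
      exact ⟨hv00, fun h => hv0 h⟩
    set K := ⟪A w, w⟫ with hK
    set c := ‖B v‖ ^ 2 with hc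
    have hKpos : 0 < K := hApos w hwne
    have hcpos : 0 < c := pow_pos (norm_pos_iff.mpr hBv) 2
    refine ⟨c / ((|M| + 1) * K), div_pos hcpos (mul_pos (by positivity) hKpos), ?_⟩
    intro ε hε hεδ
    refine ⟨v, w, hvnorm, hwnorm, ?_⟩
    have expand : ∀ (u : V),
        ⟪(A + ε⁻¹ • (LinearMap.adjoint B ∘ₗ B)) u, u⟫ = ⟪A u, u⟫ + ε⁻¹ * ‖B u‖ ^ 2 := by
      intro u
      have : ⟪(LinearMap.adjoint B) (B u), u⟫ = ‖B u‖ ^ 2 := by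
        rw [LinearMap.adjoint_inner_left, real_inner_self_eq_norm_sq]
      simp [LinearMap.add_apply, LinearMap.smul_apply, LinearMap.comp_apply, inner_add_left,
        real_inner_smul_left, this]
    rw [expand v, expand w]
    have hBw : B w = 0 := hwmem
    rw [hBw]
    simp only [norm_zero]
    have hAv : 0 ≤ ⟪A v, v⟫ := by
      by_cases h : v = 0
      · simp [h]
      · exact le_of_lt (hApos v h)
    -- from ε < c / ((|M|+1) K): ε⁻¹ c > (|M|+1) K ≥ M K
    have h1 : ε * ((|M| + 1) * K) < c := by
      rw [lt_div_iff₀ (by positivity)] at hεδ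
      exact hεδ
    have h2 : (|M| + 1) * K < ε⁻¹ * c := by
      have hεinv : 0 < ε⁻¹ := inv_pos.mpr hε
      have h4 := mul_lt_mul_of_pos_left h1 hεinv
      rwa [← mul_assoc, inv_mul_cancel₀ (ne_of_gt hε), one_mul] at h4
    have h3 : M * K ≤ (|M| + 1) * K := by
      have hM : M ≤ |M| + 1 := le_trans (le_abs_self M) (by linarith)
      nlinarith
    have : M * (K + ε⁻¹ * 0 ^ 2) = M * K := by ring
    rw [this, ← hc]
    linarith
end
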